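/- arXiv:1510.05015 — 2 statements merged into one kernel-verified Lean document; each statement's English description precedes it below -/
import Mathlib

section
/- The ℂ-vector subspace of functions [a,b] → ℂ^n spanned by the union over all θ ∈ (0,π) of the spaces E(r,θ) has dimension at most n, for every fixed r ∈ ℝ. -/
/-!
Let `L ⊆ ℂⁿ × ℂⁿ` be the span of the Cauchy data `(u(a), u'(a))` of the eigenfunctions with
`θ ∈ (0,π)`. By uniqueness for the linear system `u'' = (V - r) u`, an element of the span of these
eigenfunctions is determined by its Cauchy data at `a`, so the span has dimension at most `dim L`.
Since `V` is symmetric, the bilinear (not Hermitian) Wronskian `u'·v - u·v'` of two solutions is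
constant on `[a,b]`, while the boundary conditions multiply it by `e^{i(θ₁+θ₂)} ≠ 1` from `a` to
`b`. Hence it vanishes: `L` is isotropic for the symplectic form `ω(z,w) = z₂·w₁ - z₁·w₂`, and an
isotropic subspace of the nondegenerate `2n`-dimensional space has dimension at most `n`.
-/

open Set Matrix

noncomputable section

/-- `u` (with derivatives `u'`, `u''` on `[a,b]`) is a `(λ,θ)`-eigenfunction:
`-u'' + Vu = λu` on `[a,b]` with `θ`-periodic boundary conditions. -/
def IsEig (n : ℕ) (a b : ℝ) (V : ℝ → Matrix (Fin n) (Fin n) ℝ) (lam θ : ℝ)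
    (u u' u'' : ℝ → Fin n → ℂ) : Prop :=
  (∀ x ∈ Icc a b, HasDerivWithinAt u (u' x) (Icc a b) x) ∧
  (∀ x ∈ Icc a b, HasDerivWithinAt u' (u'' x) (Icc a b) x) ∧
  (∀ x ∈ Icc a b, -u'' x + ((V x).map Complex.ofReal).mulVec (u x) = (lam : ℂ) • u x) ∧
  u b = Complex.exp (θ * Complex.I) • u a ∧
  u' b = Complex.exp (θ * Complex.I) • u' a

/-- The eigenspace `E(λ,θ)`, realized as the set of restrictions to `[a,b]` of
`(λ,θ)`-eigenfunctions. -/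
def Eset (n : ℕ) (a b : ℝ) (V : ℝ → Matrix (Fin n) (Fin n) ℝ) (lam θ : ℝ) :
    Set (Icc a b → Fin n → ℂ) :=
  {f | ∃ u u' u'', IsEig n a b V lam θ u u' u'' ∧ ∀ x : Icc a b, f x = u x}

universe u

theorem Submodule.rank_map_le_rank_map_of_ker_le {K : Type*} {Q A B : Type u} [DivisionRing K]
    [AddCommGroup Q] [Module K Q] [AddCommGroup A] [Module K A] [AddCommGroup B] [Module K B]
    (P : Submodule K Q) (f : Q →ₗ[K] A) (g : Q →ₗ[K] B)
    (h : P ⊓ LinearMap.ker f ≤ LinearMap.ker g) :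
    Module.rank K (P.map g) ≤ Module.rank K (P.map f) := by
  set f' := f ∘ₗ P.subtype
  set g' := g ∘ₗ P.subtype
  have hker : LinearMap.ker f' ≤ LinearMap.ker g' := fun q hq => h ⟨q.2, hq⟩
  have hf : LinearMap.range f' = P.map f := by
    rw [LinearMap.range_comp, Submodule.range_subtype]
  have hg : LinearMap.range g' = P.map g := by
    rw [LinearMap.range_comp, Submodule.range_subtype]
  rw [← hf, ← hg, ← Submodule.range_liftQ _ g' hker, ← f'.quotKerEquivRange.rank_eq]
  exact rank_range_le _

section Symplectic

variable (K ι : Type*) [Field K] [Fintype ι]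

def symplecticForm : LinearMap.BilinForm K ((ι → K) × (ι → K)) :=
  (dotProductBilin K K).compl₁₂ (LinearMap.snd K _ _) (LinearMap.fst K _ _) -
    (dotProductBilin K K).compl₁₂ (LinearMap.fst K _ _) (LinearMap.snd K _ _)

variable {K ι}

theorem symplecticForm_apply (z w : (ι → K) × (ι → K)) :
    symplecticForm K ι z w = z.2 ⬝ᵥ w.1 - z.1 ⬝ᵥ w.2 :=
  rfl

theorem symplecticForm_isAlt : LinearMap.IsAlt (symplecticForm K ι) := fun z => by
  rw [symplecticForm_apply, dotProduct_comm, sub_self]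

theorem symplecticForm_nondegenerate : (symplecticForm K ι).Nondegenerate := by
  classical
  refine (LinearMap.IsAlt.isRefl symplecticForm_isAlt).nondegenerate_iff_separatingLeft.mpr
    fun z hz => ?_
  ext i
  · simpa [symplecticForm_apply] using hz (0, Pi.single i 1)
  · simpa [symplecticForm_apply] using hz (Pi.single i 1, 0)

theorem finrank_span_le_card_of_isotropic {D : Set ((ι → K) × (ι → K))}
    (hD : ∀ p ∈ D, ∀ q ∈ D, symplecticForm K ι p q = 0) :
    Module.finrank K (Submodule.span K D) ≤ Fintype.card ι := by
  set W := Submodule.span K D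
  have hW : W ≤ (symplecticForm K ι).orthogonal W := by
    refine Submodule.span_le.mpr fun q hq p hp => ?_
    have : W ≤ LinearMap.ker ((symplecticForm K ι).flip q) :=
      Submodule.span_le.mpr fun p' hp' => hD p' hp' q hq
    exact this hp
  have hdim := Submodule.finrank_mono hW
  rw [LinearMap.BilinForm.finrank_orthogonal symplecticForm_nondegenerate,
    Module.finrank_prod, Module.finrank_fintype_fun_eq_card] at hdim
  omega

end Symplectic

theorem HasDerivWithinAt.dotProduct {ι 𝔸 : Type*} [Fintype ι] [NormedCommRing 𝔸]
    [NormedAlgebra ℝ 𝔸] {u v : ℝ → ι → 𝔸} {u' v' : ι → 𝔸} {s : Set ℝ} {x : ℝ}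
    (hu : HasDerivWithinAt u u' s x) (hv : HasDerivWithinAt v v' s x) :
    HasDerivWithinAt (fun t => u t ⬝ᵥ v t) (u' ⬝ᵥ v x + u x ⬝ᵥ v') s x := by
  have hi (i : ι) := (hasDerivWithinAt_pi.mp hu i).mul (hasDerivWithinAt_pi.mp hv i)
  have hsum := HasDerivWithinAt.fun_sum (u := Finset.univ) fun i _ => hi i
  rw [Finset.sum_add_distrib] at hsum
  exact hsum

theorem Matrix.IsSymm.mulVec_dotProduct {ι α : Type*} [Fintype ι] [CommSemiring α]
    {A : Matrix ι ι α} (hA : A.IsSymm) (v w : ι → α) : (A *ᵥ v) ⬝ᵥ w = v ⬝ᵥ (A *ᵥ w) := by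
  rw [dotProduct_comm, ← dotProduct_transpose_mulVec, hA]

def cauchyData {R ι : Type*} [Semiring R] (x : ℝ) :
    ((ℝ → ι → R) × (ℝ → ι → R)) →ₗ[R] (ι → R) × (ι → R) :=
  (LinearMap.proj x).prodMap (LinearMap.proj x)

section SecondOrderSystem

variable {𝕜 ι : Type*} [RCLike 𝕜] [Fintype ι]

def secondOrderSolutions (M : ℝ → Matrix ι ι 𝕜) (s : Set ℝ) :
    Submodule 𝕜 ((ℝ → ι → 𝕜) × (ℝ → ι → 𝕜)) where
  carrier := {q | ∀ x ∈ s,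
    HasDerivWithinAt q.1 (q.2 x) s x ∧ HasDerivWithinAt q.2 (M x *ᵥ q.1 x) s x}
  add_mem' hp hq x hx :=
    ⟨(hp x hx).1.add (hq x hx).1, by simpa [mulVec_add] using (hp x hx).2.add (hq x hx).2⟩
  zero_mem' x _ := by
    simp only [Prod.fst_zero, Prod.snd_zero, Pi.zero_apply, mulVec_zero]
    exact ⟨hasDerivWithinAt_const _ _ _, hasDerivWithinAt_const _ _ _⟩
  smul_mem' c q hq x hx :=
    ⟨(hq x hx).1.const_smul c, by simpa [mulVec_smul] using (hq x hx).2.const_smul c⟩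

section

attribute [local instance] Matrix.linftyOpNormedAddCommGroup

theorem exists_lipschitzWith_mulVec_of_continuousOn {M : ℝ → Matrix ι ι 𝕜} {s : Set ℝ}
    (hs : IsCompact s) (hM : ContinuousOn M s) : ∃ K, ∀ t ∈ s, LipschitzWith K (M t *ᵥ ·) := by
  obtain ⟨C, hC⟩ := hs.exists_bound_of_continuousOn hM
  refine ⟨C.toNNReal, fun t ht => ?_⟩
  refine (AddMonoidHomClass.lipschitz_of_bound_nnnorm (mulVecLin (M t)) _
    (linfty_opNNNorm_mulVec (M t))).weaken ?_
  rw [← NNReal.coe_le_coe, coe_nnnorm]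
  exact (hC t ht).trans (Real.le_coe_toNNReal C)

end

variable {M : ℝ → Matrix ι ι 𝕜} {a b : ℝ} {p q : (ℝ → ι → 𝕜) × (ℝ → ι → 𝕜)}

theorem secondOrderSolutions.eqOn_zero_of_cauchyData_eq_zero (hM : ContinuousOn M (Icc a b))
    (hq : q ∈ secondOrderSolutions M (Icc a b)) (h₀ : cauchyData a q = 0) :
    EqOn q.1 0 (Icc a b) := by
  obtain ⟨K, hK⟩ := exists_lipschitzWith_mulVec_of_continuousOn isCompact_Icc hM
  have hv (t) (ht : t ∈ Ico a b) :
      LipschitzOnWith (max 1 (K * 1)) (fun y : (ι → 𝕜) × (ι → 𝕜) => (y.2, M t *ᵥ y.1)) univ :=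
    (LipschitzWith.prod_snd.prodMk
      ((hK t (Ico_subset_Icc_self ht)).comp LipschitzWith.prod_fst)).lipschitzOnWith
  have hq' (t) (ht : t ∈ Ico a b) : HasDerivWithinAt (fun x => (q.1 x, q.2 x))
      (q.2 t, M t *ᵥ q.1 t) (Ici t) t :=
    ((hq t (Ico_subset_Icc_self ht)).1.prodMk (hq t (Ico_subset_Icc_self ht)).2)
      |>.mono_of_mem_nhdsWithin (Icc_mem_nhdsGE_of_mem ht)
  have h0' (t) (_ : t ∈ Ico a b) : HasDerivWithinAt (fun _ => (0 : (ι → 𝕜) × (ι → 𝕜)))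
      ((0 : (ι → 𝕜) × (ι → 𝕜)).2, M t *ᵥ (0 : (ι → 𝕜) × (ι → 𝕜)).1) (Ici t) t := by
    simp only [Prod.fst_zero, Prod.snd_zero, mulVec_zero]
    exact hasDerivWithinAt_const t (Ici t) (0 : (ι → 𝕜) × (ι → 𝕜))
  have hcont : ContinuousOn (fun x => (q.1 x, q.2 x)) (Icc a b) := fun x hx =>
    (hq x hx).1.continuousWithinAt.prodMk (hq x hx).2.continuousWithinAt
  have heq := ODE_solution_unique_of_mem_Icc_right hv hcont hq' (fun _ _ => trivial)
    continuousOn_const h0' (fun _ _ => trivial) h₀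
  exact fun x hx => congrArg Prod.fst (heq hx)

theorem secondOrderSolutions.symplecticForm_cauchyData_eq (hab : a ≤ b)
    (hM : ∀ x ∈ Icc a b, (M x).IsSymm)
    (hp : p ∈ secondOrderSolutions M (Icc a b)) (hq : q ∈ secondOrderSolutions M (Icc a b)) :
    symplecticForm 𝕜 ι (cauchyData b p) (cauchyData b q) =
      symplecticForm 𝕜 ι (cauchyData a p) (cauchyData a q) := by
  set W : ℝ → 𝕜 := fun x => symplecticForm 𝕜 ι (cauchyData x p) (cauchyData x q)
  have hW (x) (hx : x ∈ Icc a b) : HasDerivWithinAt W 0 (Icc a b) x := by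
    have h := ((hp x hx).2.dotProduct (hq x hx).1).sub ((hp x hx).1.dotProduct (hq x hx).2)
    rwa [(hM x hx).mulVec_dotProduct, add_comm, add_sub_add_left_eq_sub, sub_self] at h
  exact constant_of_has_deriv_right_zero (fun x hx => (hW x hx).continuousWithinAt)
    (fun x hx => (hW x (Ico_subset_Icc_self hx)).mono_of_mem_nhdsWithin
      (Icc_mem_nhdsGE_of_mem hx)) b ⟨hab, le_rfl⟩

end SecondOrderSystem

theorem Complex.exp_mul_I_ne_one {t : ℝ} (h₀ : 0 < t) (h₂π : t < 2 * Real.pi) :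
    Complex.exp (t * Complex.I) ≠ 1 := fun h => by
  have hcos : Real.cos t = 1 := by
    simpa only [Complex.exp_ofReal_mul_I_re, Complex.one_re] using congrArg Complex.re h
  rw [Real.cos_eq_one_iff_of_lt_of_lt (by linarith) h₂π] at hcos
  exact h₀.ne' hcos

def shiftedPotential {n : ℕ} (V : ℝ → Matrix (Fin n) (Fin n) ℝ) (r x : ℝ) :
    Matrix (Fin n) (Fin n) ℂ :=
  (V x).map Complex.ofReal - (r : ℂ) • 1

section Eigenfunctions

variable {n : ℕ} {a b : ℝ} {V : ℝ → Matrix (Fin n) (Fin n) ℝ} {r : ℝ}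

theorem continuousOn_shiftedPotential
    (hVcont : ∀ i j, ContinuousOn (fun x => V x i j) (Icc a b)) :
    ContinuousOn (shiftedPotential V r) (Icc a b) :=
  continuousOn_pi.mpr fun i => continuousOn_pi.mpr fun j =>
    (Complex.continuous_ofReal.comp_continuousOn (hVcont i j)).sub continuousOn_const

variable {θ : ℝ} {u u' u'' : ℝ → Fin n → ℂ}

theorem IsEig.mem_secondOrderSolutions (hu : IsEig n a b V r θ u u' u'') :
    (u, u') ∈ secondOrderSolutions (shiftedPotential V r) (Icc a b) := fun x hx => by
  refine ⟨hu.1 x hx, ?_⟩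
  have hu'' : u'' x = shiftedPotential V r x *ᵥ u x := by
    rw [shiftedPotential, sub_mulVec, smul_mulVec, one_mulVec, ← hu.2.2.1 x hx]
    abel
  exact hu'' ▸ hu.2.1 x hx

theorem IsEig.cauchyData_right (hu : IsEig n a b V r θ u u' u'') :
    cauchyData b (u, u') = Complex.exp (θ * Complex.I) • cauchyData a (u, u') :=
  Prod.ext hu.2.2.2.1 hu.2.2.2.2

theorem IsEig.symplecticForm_cauchyData_eq_zero (hab : a ≤ b)
    (hVsymm : ∀ x ∈ Icc a b, (V x)ᵀ = V x) {θ₁ θ₂ : ℝ} (hθ₁ : θ₁ ∈ Ioo 0 Real.pi)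
    (hθ₂ : θ₂ ∈ Ioo 0 Real.pi) {v v' v'' : ℝ → Fin n → ℂ}
    (hu : IsEig n a b V r θ₁ u u' u'') (hv : IsEig n a b V r θ₂ v v' v'') :
    symplecticForm ℂ (Fin n) (cauchyData a (u, u')) (cauchyData a (v, v')) = 0 := by
  have hW := secondOrderSolutions.symplecticForm_cauchyData_eq hab
    (fun x hx => (IsSymm.map (hVsymm x hx) _).sub (isSymm_one.smul _))
    hu.mem_secondOrderSolutions hv.mem_secondOrderSolutions
  rw [hu.cauchyData_right, hv.cauchyData_right, map_smul, LinearMap.map_smul₂,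
    smul_smul, smul_eq_mul, ← Complex.exp_add, ← add_mul, ← Complex.ofReal_add] at hW
  have hne := Complex.exp_mul_I_ne_one (add_pos hθ₂.1 hθ₁.1) (by linarith [hθ₁.2, hθ₂.2])
  have h : (Complex.exp (↑(θ₂ + θ₁) * Complex.I) - 1) *
      symplecticForm ℂ (Fin n) (cauchyData a (u, u')) (cauchyData a (v, v')) = 0 := by
    rw [sub_mul, one_mul, hW, sub_self]
  exact (mul_eq_zero.mp h).resolve_left (sub_ne_zero.mpr hne)

end Eigenfunctions

theorem span_union_eigenspaces_dim_le_general (n : ℕ) (a b : ℝ) (hab : a < b)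
    (V : ℝ → Matrix (Fin n) (Fin n) ℝ)
    (hVcont : ∀ i j, ContinuousOn (fun x => V x i j) (Icc a b))
    (hVsymm : ∀ x ∈ Icc a b, (V x)ᵀ = V x)
    (r : ℝ) :
    Set.finrank ℂ (⋃ θ ∈ Ioo (0 : ℝ) Real.pi, Eset n a b V r θ) ≤ n := by
  set T : Set ((ℝ → Fin n → ℂ) × (ℝ → Fin n → ℂ)) :=
    {q | ∃ θ ∈ Ioo 0 Real.pi, ∃ u'', IsEig n a b V r θ q.1 q.2 u''}
  set P := Submodule.span ℂ T
  set restrict := LinearMap.funLeft ℂ (Fin n → ℂ) ((↑) : Icc a b → ℝ) ∘ₗ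
    LinearMap.fst ℂ (ℝ → Fin n → ℂ) (ℝ → Fin n → ℂ)
  have hP : P ≤ secondOrderSolutions (shiftedPotential V r) (Icc a b) :=
    Submodule.span_le.mpr fun q ⟨_, _, _, hq⟩ => hq.mem_secondOrderSolutions
  have hE : Submodule.span ℂ (⋃ θ ∈ Ioo 0 Real.pi, Eset n a b V r θ) ≤ P.map restrict := by
    rw [Submodule.map_span]
    refine Submodule.span_mono fun f hf => ?_
    obtain ⟨θ, hθ, u, u', u'', hu, hf⟩ := mem_iUnion₂.mp hf
    exact ⟨(u, u'), ⟨θ, hθ, u'', hu⟩, funext fun x => (hf x).symm⟩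
  have hker : P ⊓ LinearMap.ker (cauchyData a) ≤ LinearMap.ker restrict := fun q ⟨hq, h₀⟩ =>
    funext fun x => secondOrderSolutions.eqOn_zero_of_cauchyData_eq_zero
      (continuousOn_shiftedPotential hVcont) (hP hq) h₀ x.2
  have hD : ∀ p ∈ cauchyData a '' T, ∀ q ∈ cauchyData a '' T,
      symplecticForm ℂ (Fin n) p q = 0 := by
    rintro _ ⟨p, ⟨θ₁, hθ₁, _, hp⟩, rfl⟩ _ ⟨q, ⟨θ₂, hθ₂, _, hq⟩, rfl⟩
    exact IsEig.symplecticForm_cauchyData_eq_zero hab.le hVsymm hθ₁ hθ₂ hp hq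
  refine Module.finrank_le_of_rank_le ?_
  calc Module.rank ℂ (Submodule.span ℂ (⋃ θ ∈ Ioo 0 Real.pi, Eset n a b V r θ))
      ≤ Module.rank ℂ (P.map restrict) := Submodule.rank_mono hE
    _ ≤ Module.rank ℂ (P.map (cauchyData a)) := P.rank_map_le_rank_map_of_ker_le _ _ hker
    _ = Module.finrank ℂ (Submodule.span ℂ (cauchyData a '' T)) := by
      rw [Submodule.map_span, Module.finrank_eq_rank]
    _ ≤ n := by
      exact_mod_cast (finrank_span_le_card_of_isotropic hD).trans_eq (Fintype.card_fin n)

/-- for every fixed `r`, the ℂ-subspace spanned by `⋃_{θ ∈ (0,π)} E(r,θ)`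
has dimension at most `n`. -/
theorem span_union_eigenspaces_dim_le (n : ℕ) (hn : 1 ≤ n) (a b : ℝ) (hab : a < b)
    (V : ℝ → Matrix (Fin n) (Fin n) ℝ)
    (hVcont : ∀ i j, ContinuousOn (fun x => V x i j) (Icc a b))
    (hVsymm : ∀ x ∈ Icc a b, (V x)ᵀ = V x)
    (r : ℝ) :
    Set.finrank ℂ (⋃ θ ∈ Ioo (0 : ℝ) Real.pi, Eset n a b V r θ) ≤ n :=
  span_union_eigenspaces_dim_le_general n a b hab V hVcont hVsymm r
end
end

section
/- Let (θ₁,θ₂) ⊆ (0,π) or (θ₁,θ₂) ⊆ (π,2π), and let (λ, u) be a C¹ eigenvalue branch on (θ₁,θ₂) with u(θ,·) not identically zero for each θ. Then either λ is monotone on (θ₁,θ₂), or there exists θ* ∈ (θ₁,θ₂) such that Im⟨∂ₓu(θ*,a), u(θ*,a)⟩ = 0. -/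
open Set Matrix

noncomputable section

/-- The inner product `⟨v,w⟩ = Σ_j v_j conj(w_j)` on `ℂ^n`. -/
def cinner (n : ℕ) (v w : Fin n → ℂ) : ℂ := ∑ j, v j * (starRingEnd ℂ) (w j)

/-- `(lam, u)` (with the indicated partial derivatives) is a C¹ eigenvalue branch on
`(θ₁,θ₂)`: `lam` is differentiable with derivative `lam'`, for each `θ` the function
`u(θ,·)` is a `(lam(θ),θ)`-eigenfunction with `∂ₓu = ux`, `∂ₓ∂ₓu = uxx`, the maps `u`
and `ux` are differentiable in `θ` with derivatives `uθ`, `uθx`, and `uθ`, `uθx` are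
jointly continuous on `(θ₁,θ₂) × [a,b]`. -/
def IsBranch (n : ℕ) (a b : ℝ) (V : ℝ → Matrix (Fin n) (Fin n) ℝ) (θ₁ θ₂ : ℝ)
    (lam lam' : ℝ → ℝ) (u ux uxx uθ uθx : ℝ → ℝ → Fin n → ℂ) : Prop :=
  (∀ θ ∈ Ioo θ₁ θ₂, HasDerivWithinAt lam (lam' θ) (Ioo θ₁ θ₂) θ) ∧
  (∀ θ ∈ Ioo θ₁ θ₂, IsEig n a b V (lam θ) θ (u θ) (ux θ) (uxx θ)) ∧
  (∀ θ ∈ Ioo θ₁ θ₂, ∀ x ∈ Icc a b,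
      HasDerivWithinAt (fun t => u t x) (uθ θ x) (Ioo θ₁ θ₂) θ) ∧
  (∀ θ ∈ Ioo θ₁ θ₂, ∀ x ∈ Icc a b,
      HasDerivWithinAt (fun t => ux t x) (uθx θ x) (Ioo θ₁ θ₂) θ) ∧
  ContinuousOn (fun p : ℝ × ℝ => uθ p.1 p.2) (Ioo θ₁ θ₂ ×ˢ Icc a b) ∧
  ContinuousOn (fun p : ℝ × ℝ => uθx p.1 p.2) (Ioo θ₁ θ₂ ×ˢ Icc a b)

open Filter Topology

/-!
Green's identity for two quasi-periodic eigenfunctions `f = u(t,·)` and `g = u(s,·)` reads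
`(λ(s) - λ(t)) ∫ ⟨f, g⟩ = (e^{i(t-s)} - 1) [f, g](a)`, where `[f, g] = ⟨f', g⟩ - ⟨f, g'⟩`.
Both sides vanish at `s = t`; differentiating them there gives the Hellmann–Feynman type formula
`λ'(t) ∫ |u(t,·)|² = 2 Im ⟨∂ₓu(t,a), u(t,a)⟩`. If the right-hand side never vanishes, it has a
constant sign on the interval by the intermediate value theorem, hence so does `λ'`.
-/

section cinner

variable {n : ℕ}

theorem cinner_smul_left (c : ℂ) (v w : Fin n → ℂ) : cinner n (c • v) w = c * cinner n v w := by
  simp [cinner, Finset.mul_sum, mul_assoc]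

theorem cinner_smul_right (c : ℂ) (v w : Fin n → ℂ) :
    cinner n v (c • w) = starRingEnd ℂ c * cinner n v w := by
  simp only [cinner, Finset.mul_sum, Pi.smul_apply, smul_eq_mul, map_mul]
  exact Finset.sum_congr rfl fun j _ => by ring

theorem cinner_sub_left (v₁ v₂ w : Fin n → ℂ) :
    cinner n (v₁ - v₂) w = cinner n v₁ w - cinner n v₂ w := by
  simp [cinner, sub_mul, Finset.sum_sub_distrib]

theorem cinner_sub_right (v w₁ w₂ : Fin n → ℂ) :
    cinner n v (w₁ - w₂) = cinner n v w₁ - cinner n v w₂ := by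
  simp [cinner, mul_sub, Finset.sum_sub_distrib]

theorem conj_cinner (v w : Fin n → ℂ) : starRingEnd ℂ (cinner n w v) = cinner n v w := by
  simp [cinner, map_sum, mul_comm]

theorem cinner_self (v : Fin n → ℂ) : cinner n v v = ((∑ j, Complex.normSq (v j) : ℝ) : ℂ) := by
  simp [cinner, Complex.mul_conj]

theorem norm_cinner_le (v w : Fin n → ℂ) : ‖cinner n v w‖ ≤ n * (‖v‖ * ‖w‖) := by
  calc ‖cinner n v w‖ ≤ ∑ j, ‖v j * starRingEnd ℂ (w j)‖ := norm_sum_le _ _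
    _ ≤ ∑ _j : Fin n, ‖v‖ * ‖w‖ := Finset.sum_le_sum fun j _ => by
        rw [norm_mul, RCLike.norm_conj]
        exact mul_le_mul (norm_le_pi_norm v j) (norm_le_pi_norm w j) (norm_nonneg _) (norm_nonneg _)
    _ = n * (‖v‖ * ‖w‖) := by simp

theorem cinner_mulVec_of_transpose_eq {M : Matrix (Fin n) (Fin n) ℝ} (hM : Mᵀ = M)
    (v w : Fin n → ℂ) :
    cinner n (M.map Complex.ofReal *ᵥ v) w = cinner n v (M.map Complex.ofReal *ᵥ w) := by
  have hsymm : ∀ j k, M k j = M j k := fun j k => by rw [← transpose_apply M j k, hM]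
  simp only [cinner, mulVec, dotProduct, map_apply, map_sum, Finset.sum_mul, Finset.mul_sum]
  rw [Finset.sum_comm]
  refine Finset.sum_congr rfl fun j _ => Finset.sum_congr rfl fun k _ => ?_
  rw [map_mul, Complex.conj_ofReal, hsymm j k]
  ring

theorem continuous_cinner : Continuous fun p : (Fin n → ℂ) × (Fin n → ℂ) => cinner n p.1 p.2 := by
  unfold _root_.cinner
  fun_prop

theorem ContinuousOn.cinner {X : Type*} [TopologicalSpace X] {f g : X → Fin n → ℂ} {s : Set X}
    (hf : ContinuousOn f s) (hg : ContinuousOn g s) :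
    ContinuousOn (fun x => cinner n (f x) (g x)) s :=
  continuous_cinner.comp_continuousOn (hf.prodMk hg)

theorem ContinuousAt.cinner {X : Type*} [TopologicalSpace X] {f g : X → Fin n → ℂ} {x : X}
    (hf : ContinuousAt f x) (hg : ContinuousAt g x) :
    ContinuousAt (fun x => cinner n (f x) (g x)) x :=
  continuous_cinner.continuousAt.comp (hf.prodMk hg)

theorem HasDerivWithinAt.cinner {f g : ℝ → Fin n → ℂ} {f' g' : Fin n → ℂ} {s : Set ℝ} {x : ℝ}
    (hf : HasDerivWithinAt f f' s x) (hg : HasDerivWithinAt g g' s x) :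
    HasDerivWithinAt (fun y => cinner n (f y) (g y))
      (cinner n f' (g x) + cinner n (f x) g') s x := by
  have hfj := hasDerivWithinAt_pi.mp hf
  have hgj := hasDerivWithinAt_pi.mp hg
  simpa [_root_.cinner, Finset.sum_add_distrib] using
    HasDerivWithinAt.fun_sum fun j _ => (hfj j).mul (hgj j).star

theorem TendstoUniformlyOn.cinner_left {ι α : Type*} {l : Filter ι} {F : ι → α → Fin n → ℂ}
    {f g : α → Fin n → ℂ} {K : Set α} {C : ℝ} (hF : TendstoUniformlyOn F g l K)
    (hf : ∀ x ∈ K, ‖f x‖ ≤ C) :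
    TendstoUniformlyOn (fun i x => cinner n (f x) (F i x)) (fun x => cinner n (f x) (g x)) l K := by
  rw [Metric.tendstoUniformlyOn_iff] at hF ⊢
  intro ε hε
  have hA : 0 < n * |C| + 1 := by positivity
  filter_upwards [hF (ε / (n * |C| + 1)) (div_pos hε hA)] with i hi x hx
  rw [dist_eq_norm, ← cinner_sub_right]
  calc ‖cinner n (f x) (g x - F i x)‖ ≤ n * (‖f x‖ * ‖g x - F i x‖) := norm_cinner_le _ _
    _ ≤ n * (|C| * (ε / (n * |C| + 1))) := by
        rw [← dist_eq_norm]
        gcongr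
        exacts [(hf x hx).trans (le_abs_self C), (hi x hx).le]
    _ < ε := by
        rw [← mul_assoc, mul_div_assoc', div_lt_iff₀ hA]
        nlinarith

end cinner

theorem tendstoUniformlyOn_of_hasDerivWithinAt {E : Type*} [NormedAddCommGroup E]
    [NormedSpace ℝ E] {F G : ℝ → ℝ → E} {S K : Set ℝ} {t : ℝ} (hS : IsOpen S) (ht : t ∈ S)
    (hK : IsCompact K) (hF : ∀ s ∈ S, ∀ x ∈ K, HasDerivWithinAt (fun r => F r x) (G s x) S s)
    (hG : ContinuousOn (fun p : ℝ × ℝ => G p.1 p.2) (S ×ˢ K)) :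
    TendstoUniformlyOn F (F t) (𝓝 t) K := by
  obtain ⟨δ, hδ, hball⟩ := Metric.nhds_basis_closedBall.mem_iff.mp (hS.mem_nhds ht)
  obtain ⟨M, hM⟩ := ((isCompact_closedBall t δ).prod hK).exists_bound_of_continuousOn
    (hG.mono (prod_mono hball subset_rfl))
  have hlip : ∀ s ∈ Metric.closedBall t δ, ∀ x ∈ K, ‖F s x - F t x‖ ≤ M * ‖s - t‖ :=
    fun s hs x hx => (convex_closedBall t δ).norm_image_sub_le_of_norm_hasDerivWithin_le
      (fun r hr => (hF r (hball hr) x hx).mono hball) (fun r hr => hM (r, x) ⟨hr, hx⟩)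
      (Metric.mem_closedBall_self hδ.le) hs
  have hsmall : Tendsto (fun s => M * ‖s - t‖) (𝓝 t) (𝓝 0) := by
    simpa using ((continuous_id.sub (continuous_const (y := t))).norm.const_mul M).tendsto t
  rw [Metric.tendstoUniformlyOn_iff]
  intro ε hε
  filter_upwards [Metric.closedBall_mem_nhds t hδ, hsmall.eventually (gt_mem_nhds hε)]
    with s hs hsε x hx
  rw [dist_comm, dist_eq_norm]
  exact (hlip s hs x hx).trans_lt hsε

theorem HasDerivAt.mul_of_eq_zero {𝕜 𝔸 : Type*} [NontriviallyNormedField 𝕜] [NormedRing 𝔸]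
    [NormedAlgebra 𝕜 𝔸] {f g : 𝕜 → 𝔸} {f' : 𝔸} {x : 𝕜} (hf : HasDerivAt f f' x) (hfx : f x = 0)
    (hg : ContinuousAt g x) : HasDerivAt (fun y => f y * g y) (f' * g x) x := by
  rw [hasDerivAt_iff_tendsto_slope] at hf ⊢
  refine (hf.mul (hg.tendsto.mono_left nhdsWithin_le_nhds)).congr fun y => ?_
  simp only [slope_def_module, hfx, sub_zero, zero_mul, smul_mul_assoc]

section IsEig

variable {n : ℕ} {a b : ℝ} {V : ℝ → Matrix (Fin n) (Fin n) ℝ} {lam mu θ φ : ℝ}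
  {f f' f'' g g' g'' : ℝ → Fin n → ℂ}

theorem IsEig.snd_deriv_eq (hf : IsEig n a b V lam θ f f' f'') {x : ℝ} (hx : x ∈ Icc a b) :
    f'' x = (V x).map Complex.ofReal *ᵥ f x - (lam : ℂ) • f x := by
  rw [← hf.2.2.1 x hx]
  abel

theorem IsEig.hasDerivWithinAt_bracket (hV : ∀ x ∈ Icc a b, (V x)ᵀ = V x)
    (hf : IsEig n a b V lam θ f f' f'') (hg : IsEig n a b V mu φ g g' g'') {x : ℝ}
    (hx : x ∈ Icc a b) :
    HasDerivWithinAt (fun y => cinner n (f' y) (g y) - cinner n (f y) (g' y))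
      (((mu : ℂ) - lam) * cinner n (f x) (g x)) (Icc a b) x := by
  refine (((hf.2.1 x hx).cinner (hg.1 x hx)).sub ((hf.1 x hx).cinner (hg.2.1 x hx))).congr_deriv ?_
  rw [hf.snd_deriv_eq hx, hg.snd_deriv_eq hx, cinner_sub_left, cinner_sub_right,
    cinner_mulVec_of_transpose_eq (hV x hx), cinner_smul_left, cinner_smul_right,
    Complex.conj_ofReal]
  ring

theorem IsEig.bracket_right_endpoint (hf : IsEig n a b V lam θ f f' f'')
    (hg : IsEig n a b V mu φ g g' g'') :
    cinner n (f' b) (g b) - cinner n (f b) (g' b) =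
      Complex.exp ((θ - φ) * Complex.I) * (cinner n (f' a) (g a) - cinner n (f a) (g' a)) := by
  have hphase : Complex.exp (θ * Complex.I) * starRingEnd ℂ (Complex.exp (φ * Complex.I)) =
      Complex.exp ((θ - φ) * Complex.I) := by
    rw [← Complex.exp_conj, ← Complex.exp_add]
    congr 1
    simp only [map_mul, Complex.conj_ofReal, Complex.conj_I]
    ring
  rw [hf.2.2.2.1, hf.2.2.2.2, hg.2.2.2.1, hg.2.2.2.2, cinner_smul_left, cinner_smul_right,
    cinner_smul_left, cinner_smul_right, ← hphase]
  ring

theorem IsEig.green (hV : ∀ x ∈ Icc a b, (V x)ᵀ = V x) (hab : a ≤ b)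
    (hf : IsEig n a b V lam θ f f' f'') (hg : IsEig n a b V mu φ g g' g'') :
    ((mu : ℂ) - lam) * ∫ x in a..b, cinner n (f x) (g x) =
      (Complex.exp ((θ - φ) * Complex.I) - 1) *
        (cinner n (f' a) (g a) - cinner n (f a) (g' a)) := by
  have hW := fun x (hx : x ∈ Icc a b) => hf.hasDerivWithinAt_bracket hV hg hx
  have hcont : ContinuousOn (fun x => cinner n (f x) (g x)) (Icc a b) :=
    ContinuousOn.cinner (fun x hx => (hf.1 x hx).continuousWithinAt)
      fun x hx => (hg.1 x hx).continuousWithinAt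
  rw [← intervalIntegral.integral_const_mul,
    intervalIntegral.integral_eq_sub_of_hasDerivAt_of_le hab
      (fun x hx => (hW x hx).continuousWithinAt)
      (fun x hx => (hW x (Ioo_subset_Icc_self hx)).hasDerivAt (Icc_mem_nhds hx.1 hx.2))
      ((continuousOn_const.mul hcont).intervalIntegrable_of_Icc hab),
    hf.bracket_right_endpoint hg]
  ring

end IsEig

section IsBranch

variable {n : ℕ} {a b : ℝ} {V : ℝ → Matrix (Fin n) (Fin n) ℝ} {θ₁ θ₂ t : ℝ} {lam lam' : ℝ → ℝ}
  {u ux uxx uθ uθx : ℝ → ℝ → Fin n → ℂ}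

theorem IsBranch.continuousAt_integral_cinner (hab : a ≤ b)
    (hb : IsBranch n a b V θ₁ θ₂ lam lam' u ux uxx uθ uθx) (ht : t ∈ Ioo θ₁ θ₂) :
    ContinuousAt (fun s => ∫ x in a..b, cinner n (u t x) (u s x)) t := by
  obtain ⟨-, heig, huθ, -, hcuθ, -⟩ := hb
  have hcont : ∀ s ∈ Ioo θ₁ θ₂, ContinuousOn (u s) (Icc a b) :=
    fun s hs x hx => ((heig s hs).1 x hx).continuousWithinAt
  obtain ⟨C, hC⟩ := isCompact_Icc.exists_bound_of_continuousOn (hcont t ht)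
  have hunif :=
    (tendstoUniformlyOn_of_hasDerivWithinAt isOpen_Ioo ht isCompact_Icc huθ hcuθ).cinner_left hC
  rw [← uIcc_of_le hab] at hunif
  refine hunif.tendsto_intervalIntegral_of_continuousOn ?_
  rw [uIcc_of_le hab]
  exact eventually_of_mem (Ioo_mem_nhds ht.1 ht.2) fun s hs => (hcont t ht).cinner (hcont s hs)

theorem IsBranch.deriv_mul_integral_normSq_eq (hV : ∀ x ∈ Icc a b, (V x)ᵀ = V x)
    (hab : a ≤ b) (hb : IsBranch n a b V θ₁ θ₂ lam lam' u ux uxx uθ uθx) (ht : t ∈ Ioo θ₁ θ₂) :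
    lam' t * ∫ x in a..b, ∑ j, Complex.normSq (u t x j) = 2 * (cinner n (ux t a) (u t a)).im := by
  have hIcont := hb.continuousAt_integral_cinner hab ht
  obtain ⟨hlam, heig, huθ, huθx, -, -⟩ := hb
  have hS : Ioo θ₁ θ₂ ∈ 𝓝 t := Ioo_mem_nhds ht.1 ht.2
  have ha : a ∈ Icc a b := left_mem_Icc.2 hab
  set I := fun s => ∫ x in a..b, cinner n (u t x) (u s x)
  set B := fun s : ℝ => cinner n (ux t a) (u s a) - cinner n (u t a) (ux s a)
  have hgreen : ∀ᶠ s in 𝓝 t,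
      ((lam s : ℂ) - lam t) * I s = (Complex.exp ((t - s) * Complex.I) - 1) * B s :=
    eventually_of_mem hS fun s hs => (heig t ht).green hV hab (heig s hs)
  have hL : HasDerivAt (fun s => ((lam s : ℂ) - lam t) * I s) (lam' t * I t) t :=
    (((hlam t ht).hasDerivAt hS).ofReal_comp.sub_const _).mul_of_eq_zero (sub_self _) hIcont
  have hphase :
      HasDerivAt (fun s : ℝ => Complex.exp ((t - s) * Complex.I) - 1) (-Complex.I) t := by
    simpa using
      (((hasDerivAt_id t).ofReal_comp.const_sub (t : ℂ)).mul_const Complex.I).cexp.sub_const 1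
  have hBcont : ContinuousAt B t :=
    (continuousAt_const.cinner ((huθ t ht a ha).hasDerivAt hS).continuousAt).sub
      (continuousAt_const.cinner ((huθx t ht a ha).hasDerivAt hS).continuousAt)
  have hR : HasDerivAt (fun s : ℝ => (Complex.exp ((t - s) * Complex.I) - 1) * B s)
      (-Complex.I * B t) t :=
    hphase.mul_of_eq_zero (by simp) hBcont
  have hderiv : (lam' t : ℂ) * I t = -Complex.I * B t :=
    hL.unique (hR.congr_of_eventuallyEq hgreen)
  have hI : I t = ((∫ x in a..b, ∑ j, Complex.normSq (u t x j) : ℝ) : ℂ) := by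
    simp only [I, cinner_self, intervalIntegral.integral_ofReal]
  have hB : -Complex.I * B t = ((2 * (cinner n (ux t a) (u t a)).im : ℝ) : ℂ) := by
    simp only [B, ← conj_cinner (u t a), Complex.sub_conj]
    push_cast
    ring_nf
    simp [Complex.I_sq]
  rw [hI, hB] at hderiv
  exact_mod_cast hderiv

end IsBranch

theorem IsPreconnected.forall_pos_or_forall_neg {X : Type*} [TopologicalSpace X] {s : Set X}
    {f : X → ℝ} (hs : IsPreconnected s) (hf : ContinuousOn f s) (h0 : ∀ x ∈ s, f x ≠ 0) :
    (∀ x ∈ s, 0 < f x) ∨ (∀ x ∈ s, f x < 0) := by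
  by_contra! h
  obtain ⟨⟨x, hx, hfx⟩, ⟨y, hy, hfy⟩⟩ := h
  obtain ⟨z, hz, hfz⟩ := hs.intermediate_value hx hy hf ⟨hfx, hfy⟩
  exact h0 z hz hfz

theorem monotone_or_im_inner_zero_general (n : ℕ) (a b : ℝ) (hab : a < b)
    (V : ℝ → Matrix (Fin n) (Fin n) ℝ)
    (hVsymm : ∀ x ∈ Icc a b, (V x)ᵀ = V x)
    (θ₁ θ₂ : ℝ)
    (lam lam' : ℝ → ℝ) (u ux uxx uθ uθx : ℝ → ℝ → Fin n → ℂ)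
    (hbranch : IsBranch n a b V θ₁ θ₂ lam lam' u ux uxx uθ uθx) :
    (MonotoneOn lam (Ioo θ₁ θ₂) ∨ AntitoneOn lam (Ioo θ₁ θ₂)) ∨
    ∃ θs ∈ Ioo θ₁ θ₂, (cinner n (ux θs a) (u θs a)).im = 0 := by
  refine or_iff_not_imp_right.2 fun hzero => ?_
  have hkey := fun θ (hθ : θ ∈ Ioo θ₁ θ₂) =>
    hbranch.deriv_mul_integral_normSq_eq hVsymm hab.le hθ
  have hnormSq : ∀ θ, 0 ≤ ∫ x in a..b, ∑ j, Complex.normSq (u θ x j) := fun θ =>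
    intervalIntegral.integral_nonneg hab.le fun _ _ =>
      Finset.sum_nonneg fun j _ => Complex.normSq_nonneg _
  obtain ⟨hlam, -, huθ, huθx, -, -⟩ := hbranch
  have ha : a ∈ Icc a b := left_mem_Icc.2 hab.le
  have hcont : ContinuousOn (fun θ => (cinner n (ux θ a) (u θ a)).im) (Ioo θ₁ θ₂) :=
    Complex.continuous_im.comp_continuousOn <|
      ContinuousOn.cinner (fun θ hθ => (huθx θ hθ a ha).continuousWithinAt)
        fun θ hθ => (huθ θ hθ a ha).continuousWithinAt
  have hlamcont : ContinuousOn lam (Ioo θ₁ θ₂) := fun θ hθ => (hlam θ hθ).continuousWithinAt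
  rw [← interior_Ioo] at hlam
  rcases isPreconnected_Ioo.forall_pos_or_forall_neg hcont
      (fun θ hθ h => hzero ⟨θ, hθ, h⟩) with hpos | hneg
  · refine .inl <| monotoneOn_of_hasDerivWithinAt_nonneg (convex_Ioo _ _) hlamcont hlam ?_
    rw [interior_Ioo]
    exact fun θ hθ => by nlinarith [hkey θ hθ, hnormSq θ, hpos θ hθ]
  · refine .inr <| antitoneOn_of_hasDerivWithinAt_nonpos (convex_Ioo _ _) hlamcont hlam ?_
    rw [interior_Ioo]
    exact fun θ hθ => by nlinarith [hkey θ hθ, hnormSq θ, hneg θ hθ]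

/-- if `(θ₁,θ₂) ⊆ (0,π)` or `(θ₁,θ₂) ⊆ (π,2π)` and `(lam, u)` is a C¹
eigenvalue branch on `(θ₁,θ₂)` with `u(θ,·)` not identically zero for each `θ`, then
either `lam` is monotone on `(θ₁,θ₂)` or there is `θ* ∈ (θ₁,θ₂)` with
`Im ⟨∂ₓu(θ*,a), u(θ*,a)⟩ = 0`. -/
theorem monotone_or_im_inner_zero (n : ℕ) (hn : 1 ≤ n) (a b : ℝ) (hab : a < b)
    (V : ℝ → Matrix (Fin n) (Fin n) ℝ)
    (hVcont : ∀ i j, ContinuousOn (fun x => V x i j) (Icc a b))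
    (hVsymm : ∀ x ∈ Icc a b, (V x)ᵀ = V x)
    (θ₁ θ₂ : ℝ) (h12 : θ₁ < θ₂)
    (hsub : Ioo θ₁ θ₂ ⊆ Ioo (0 : ℝ) Real.pi ∨ Ioo θ₁ θ₂ ⊆ Ioo Real.pi (2 * Real.pi))
    (lam lam' : ℝ → ℝ) (u ux uxx uθ uθx : ℝ → ℝ → Fin n → ℂ)
    (hbranch : IsBranch n a b V θ₁ θ₂ lam lam' u ux uxx uθ uθx)
    (hne : ∀ θ ∈ Ioo θ₁ θ₂, ∃ x ∈ Icc a b, u θ x ≠ 0) :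
    (MonotoneOn lam (Ioo θ₁ θ₂) ∨ AntitoneOn lam (Ioo θ₁ θ₂)) ∨
    ∃ θs ∈ Ioo θ₁ θ₂, (cinner n (ux θs a) (u θs a)).im = 0 :=
  monotone_or_im_inner_zero_general n a b hab V hVsymm θ₁ θ₂ lam lam' u ux uxx uθ uθx hbranch
end
end
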